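/- Let X be a tame EM-simplicial set, x ∈ X_n, and φ : [m] → [n] a map in the simplex category Δ. Then supp_k(φ^*x) ⊆ supp_{φ(k)}(x) for all 0 ≤ k ≤ m. -/

import Mathlib

noncomputable section

/- ## Basic setup: the monoid `M = Inj(ω,ω)`, supports, tameness, universal subgroups -/

open CategoryTheory Opposite Simplicial MonoidalCategory

set_option linter.unusedVariables false

/-- The monoid `𝕄 = Inj(ω,ω)` of injective self-maps of `ω = ℕ`, under composition. -/
noncomputable def Mi : Type := {f : ℕ → ℕ // Function.Injective f}

noncomputable instance : Monoid Mi where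
  one := ⟨id, fun _ _ h => h⟩
  mul u v := ⟨u.1 ∘ v.1, u.2.comp v.2⟩
  mul_assoc u v w := rfl
  one_mul u := rfl
  mul_one u := rfl

@[simp] lemma Mi.one_apply (n : ℕ) : (1 : Mi).1 n = n := rfl
@[simp] lemma Mi.mul_apply (u v : Mi) (n : ℕ) : (u * v).1 n = u.1 (v.1 n) := rfl

/-- An element `x` of an `𝕄`-"set" (given by a raw action `act`) is supported on `A ⊆ ω` if
every `u ∈ 𝕄` fixing `A` pointwise fixes `x`. -/
noncomputable def MSuppOn {X : Type*} (act : Mi → X → X) (A : Set ℕ) (x : X) : Prop :=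
  ∀ u : Mi, (∀ a ∈ A, u.1 a = a) → act u x = x

/-- Finitely supported elements. -/
noncomputable def MFinSupp {X : Type*} (act : Mi → X → X) (x : X) : Prop :=
  ∃ A : Set ℕ, A.Finite ∧ MSuppOn act A x

/-- The support of an element: the intersection of all finite sets on which it is supported. -/
noncomputable def MSupp {X : Type*} (act : Mi → X → X) (x : X) : Set ℕ :=
  ⋂₀ setOf (fun A : Set ℕ => A.Finite ∧ MSuppOn act A x)

/-- A (raw) `𝕄`-action is tame if every element is finitely supported. -/
noncomputable def MTame {X : Type*} (act : Mi → X → X) : Prop := ∀ x : X, MFinSupp act x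

/-- A submonoid `H ⊆ 𝕄` is a *universal subgroup* if it is a finite subgroup and `ω`, with the
tautological `H`-action, is a complete `H`-set universe, i.e. every finite `H`-set embeds
`H`-equivariantly into `ω`. -/
noncomputable def IsUniversal (H : Submonoid Mi) : Prop :=
  (∀ h ∈ H, ∃ h' ∈ H, h * h' = 1 ∧ h' * h = 1) ∧ Finite H ∧
    ∀ (n : ℕ) (ρ : ↥H →* Equiv.Perm (Fin n)), ∃ e : Fin n → ℕ,
      Function.Injective e ∧ ∀ (h : ↥H) (i : Fin n), e (ρ h i) = (h : Mi).1 (e i)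

/- ## `E𝕄`-simplicial sets: simplicial sets with an action of the simplicial monoid `E𝕄`,
  where `(E𝕄)_n = 𝕄^{n+1}`. -/

/-- An `E𝕄`-simplicial set: a simplicial set `X` together with, levelwise, an action of
`𝕄^{n+1} = (E𝕄)_n` on `X_n`, compatible with the simplicial structure maps. -/
structure EMSSet : Type 1 where
  X : SSet.{0}
  act : ∀ o : SimplexCategoryᵒᵖ, (Fin (o.unop.len + 1) → Mi) → X.obj o → X.obj o
  act_one : ∀ o x, act o (fun _ => 1) x = x
  act_mul : ∀ o u v x, act o (fun i => u i * v i) x = act o u (act o v x)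
  act_map : ∀ {o o' : SimplexCategoryᵒᵖ} (f : o ⟶ o') (u : Fin (o.unop.len + 1) → Mi)
      (x : X.obj o), X.map f (act o u x) = act o' (fun i => u (f.unop.toOrderHom i)) (X.map f x)

namespace EMSSet

/-- A simplex `x ∈ X_n` is `k`-supported on `A` if every `u ∈ 𝕄` fixing `A` pointwise,
inserted in the `(k+1)`-st coordinate of `𝕄^{n+1}` (identities elsewhere), fixes `x`. -/
noncomputable def KSuppOn (E : EMSSet) {o : SimplexCategoryᵒᵖ} (k : Fin (o.unop.len + 1)) (A : Set ℕ)
    (x : E.X.obj o) : Prop :=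
  ∀ w : Mi, (∀ a ∈ A, w.1 a = a) → E.act o (fun i => if i = k then w else 1) x = x

/-- `x` is `k`-finitely supported. -/
noncomputable def KFinSupp (E : EMSSet) {o : SimplexCategoryᵒᵖ} (k : Fin (o.unop.len + 1))
    (x : E.X.obj o) : Prop :=
  ∃ A : Set ℕ, A.Finite ∧ E.KSuppOn k A x

/-- The `k`-th support of a simplex: the intersection of all finite sets on which it is
`k`-supported. -/
noncomputable def ksupp (E : EMSSet) {o : SimplexCategoryᵒᵖ} (k : Fin (o.unop.len + 1))
    (x : E.X.obj o) : Set ℕ :=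
  ⋂₀ setOf (fun A : Set ℕ => A.Finite ∧ E.KSuppOn k A x)

/-- `x` is supported on `A` if it is `k`-supported on `A` for all `k`. -/
noncomputable def SuppOn (E : EMSSet) {o : SimplexCategoryᵒᵖ} (A : Set ℕ) (x : E.X.obj o) : Prop :=
  ∀ k, E.KSuppOn k A x

/-- The support of a (finitely supported) simplex. -/
noncomputable def supp (E : EMSSet) {o : SimplexCategoryᵒᵖ} (x : E.X.obj o) : Set ℕ :=
  ⋃ k, E.ksupp k x

/-- An `E𝕄`-simplicial set is tame if every simplex is `k`-finitely supported for all `k`. -/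
noncomputable def Tame (E : EMSSet) : Prop :=
  ∀ (o : SimplexCategoryᵒᵖ) (x : E.X.obj o) (k : Fin (o.unop.len + 1)), E.KFinSupp k x

end EMSSet

/-- Morphisms of `E𝕄`-simplicial sets: `E𝕄`-equivariant simplicial maps. -/
@[ext] structure EMHom (E F : EMSSet) : Type where
  toHom : E.X ⟶ F.X
  equiv : ∀ (o : SimplexCategoryᵒᵖ) (u : Fin (o.unop.len + 1) → Mi) (x : E.X.obj o),
    toHom.app o (E.act o u x) = F.act o u (toHom.app o x)

namespace EMHom

noncomputable def id' (E : EMSSet) : EMHom E E :=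
  ⟨𝟙 E.X, fun _ _ _ => rfl⟩

noncomputable def comp {E F G : EMSSet} (f : EMHom E F) (g : EMHom F G) : EMHom E G :=
  ⟨f.toHom ≫ g.toHom, fun o u x => by
    have h1 := f.equiv o u x
    have h2 := g.equiv o u (f.toHom.app o x)
    show g.toHom.app o (f.toHom.app o _) = _
    rw [h1, h2]
    rfl⟩

end EMHom

noncomputable instance : Category EMSSet where
  Hom := EMHom
  id := EMHom.id'
  comp := EMHom.comp
  id_comp f := by apply EMHom.ext; simp [EMHom.comp, EMHom.id']
  comp_id f := by apply EMHom.ext; simp [EMHom.comp, EMHom.id']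
  assoc f g h := by apply EMHom.ext; simp [EMHom.comp]

/-! Let `y = φ^* x` and let `w` fix the finite set `A` on which `x` is `φ(k)`-supported.
Since `y` is `k`-supported on some finite `B`, `i_k(w)` acts on `y` as `i_k(π)` for a finitary
permutation `π` agreeing with `w` on `A ∪ B`. Applying any `w₁` fixing `A` along the whole fibre
`φ⁻¹(φ k)` fixes `y`, so `y = i_k(w₁) z` for some `z`; choosing `w₁` with image among the fixed
points of `π` gives `i_k(π) y = i_k(π w₁) z = i_k(w₁) z = y`. -/

lemma Equiv.Perm.exists_extend_of_injOn {α : Type*} [DecidableEq α] (w : α → α) (D : Finset α)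
    (hw : Set.InjOn w D) :
    ∃ π : Equiv.Perm α, (∀ d ∈ D, π d = w d) ∧ ∀ a ∉ D ∪ D.image w, π a = a := by
  set F := D ∪ D.image w
  obtain ⟨g, hg⟩ := Set.MapsTo.exists_equiv_extend_of_card_eq (α := F) (t := F)
    (s := {i | (i : α) ∈ D}) (f := fun i => w i) (by simp)
    (fun i hi => Finset.mem_union_right _ (Finset.mem_image_of_mem w hi))
    (fun i hi j hj hij => Subtype.ext (hw hi hj hij))
  refine ⟨Equiv.Perm.ofSubtype g, fun d hd => ?_,
    fun a ha => Equiv.Perm.ofSubtype_apply_of_not_mem g ha⟩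
  rw [Equiv.Perm.ofSubtype_apply_of_mem g (Finset.mem_union_left _ hd)]
  exact hg ⟨d, _⟩ hd

lemma Mi.exists_fixing_range_subset {A S : Set ℕ} (hAS : A ⊆ S) (hS : (S \ A).Infinite) :
    ∃ w : Mi, (∀ a ∈ A, w.1 a = a) ∧ ∀ n, w.1 n ∈ S := by
  classical
  let j := hS.natEmbedding
  refine ⟨⟨fun n => if n ∈ A then n else j n, fun m n hmn => ?_⟩, fun a ha => if_pos ha,
    fun n => ?_⟩
  · by_cases hm : m ∈ A <;> by_cases hn : n ∈ A <;> simp only [hm, hn, if_true, if_false] at hmn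
    · exact hmn
    · exact absurd (hmn ▸ hm) (j n).2.2
    · exact absurd (hmn ▸ hn) (j m).2.2
    · exact j.injective (Subtype.ext hmn)
  · dsimp only
    split_ifs with hn
    exacts [hAS hn, (j n).2.1]

lemma Pi.mulSingle_mul_update_one {ι M : Type*} [DecidableEq ι] [MulOneClass M] (u : ι → M)
    (k : ι) : Pi.mulSingle k (u k) * Function.update u k 1 = u := by
  funext i
  by_cases hi : i = k
  · subst hi; simp
  · simp [hi]

namespace EMSSet

variable {E : EMSSet} {o o' : SimplexCategoryᵒᵖ}

lemma act_pi_mul (u v : Fin (o.unop.len + 1) → Mi) (x : E.X.obj o) :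
    E.act o (u * v) x = E.act o u (E.act o v x) :=
  E.act_mul o u v x

lemma kSuppOn_iff {k : Fin (o.unop.len + 1)} {A : Set ℕ} {x : E.X.obj o} :
    E.KSuppOn k A x ↔ ∀ w : Mi, (∀ a ∈ A, w.1 a = a) → E.act o (Pi.mulSingle k w) x = x := by
  have hk (w : Mi) : Pi.mulSingle k w = fun i => if i = k then w else 1 :=
    funext (Pi.mulSingle_apply k w)
  simp only [KSuppOn, hk]

lemma KSuppOn.act_mulSingle_mul {k : Fin (o.unop.len + 1)} {B : Set ℕ} {y : E.X.obj o}
    (hy : E.KSuppOn k B y) (u : Mi) {v : Mi} (hv : ∀ b ∈ B, v.1 b = b) :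
    E.act o (Pi.mulSingle k (u * v)) y = E.act o (Pi.mulSingle k u) y := by
  rw [Pi.mulSingle_mul, act_pi_mul, kSuppOn_iff.1 hy v hv]

lemma KSuppOn.exists_act_mulSingle_eq_map (f : o ⟶ o') {x : E.X.obj o}
    {k : Fin (o'.unop.len + 1)} {A : Set ℕ} (hx : E.KSuppOn (f.unop.toOrderHom k) A x)
    {w : Mi} (hw : ∀ a ∈ A, w.1 a = a) :
    ∃ z, E.act o' (Pi.mulSingle k w) z = E.X.map f x := by
  have hfibre := E.act_map f (Pi.mulSingle (f.unop.toOrderHom k) w) x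
  rw [kSuppOn_iff.1 hx w hw] at hfibre
  set u : Fin (o'.unop.len + 1) → Mi := fun i =>
    (Pi.mulSingle (f.unop.toOrderHom k) w : Fin (o.unop.len + 1) → Mi) (f.unop.toOrderHom i)
  have huk : u k = w := by simp [u]
  refine ⟨E.act o' (Function.update u k 1) (E.X.map f x), ?_⟩
  rw [← act_pi_mul, ← huk, Pi.mulSingle_mul_update_one, ← hfibre]

lemma kSuppOn_of_forall_exists_act_eq {k : Fin (o.unop.len + 1)} {A : Set ℕ} {y : E.X.obj o}
    (hA : A.Finite) (hy : E.KFinSupp k y)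
    (h : ∀ w : Mi, (∀ a ∈ A, w.1 a = a) → ∃ z, E.act o (Pi.mulSingle k w) z = y) :
    E.KSuppOn k A y := by
  classical
  obtain ⟨B, hB, hyB⟩ := hy
  rw [kSuppOn_iff]
  intro w hwA
  set D := (hA.union hB).toFinset
  obtain ⟨π, hπw, hπfix⟩ := Equiv.Perm.exists_extend_of_injOn w.1 D w.2.injOn
  let πM : Mi := ⟨π, π.injective⟩
  have hπA : ∀ a ∈ A, π a = a := fun a ha => by
    rw [hπw a (by simp [D, ha]), hwA a ha]
  have hw : w = πM * ⟨π.symm ∘ w.1, π.symm.injective.comp w.2⟩ :=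
    Subtype.ext (funext fun n => (π.apply_symm_apply _).symm)
  have hwπ : E.act o (Pi.mulSingle k w) y = E.act o (Pi.mulSingle k πM) y := by
    rw [hw]
    refine hyB.act_mulSingle_mul πM fun b hb => ?_
    simp [← hπw b (by simp [D, hb])]
  obtain ⟨w₁, hw₁A, hw₁π⟩ : ∃ w₁ : Mi, (∀ a ∈ A, w₁.1 a = a) ∧ ∀ n, π (w₁.1 n) = w₁.1 n := by
    refine Mi.exists_fixing_range_subset (S := {n | π n = n}) hπA ?_
    refine ((D ∪ D.image w.1).finite_toSet.union hA).infinite_compl.mono fun n hn => ?_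
    simp only [Set.mem_compl_iff, Set.mem_union, Finset.mem_coe, not_or] at hn
    exact ⟨hπfix n hn.1, hn.2⟩
  obtain ⟨z, rfl⟩ := h w₁ hw₁A
  have hπw₁ : πM * w₁ = w₁ := Subtype.ext (funext hw₁π)
  rw [hwπ, ← act_pi_mul, ← Pi.mulSingle_mul, hπw₁]

lemma KSuppOn.map (f : o ⟶ o') {x : E.X.obj o} {k : Fin (o'.unop.len + 1)} {A : Set ℕ}
    (hA : A.Finite) (hx : E.KSuppOn (f.unop.toOrderHom k) A x)
    (hfx : E.KFinSupp k (E.X.map f x)) : E.KSuppOn k A (E.X.map f x) :=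
  kSuppOn_of_forall_exists_act_eq hA hfx fun _ hw => hx.exists_act_mulSingle_eq_map f hw

end EMSSet

theorem ksupp_of_pullback_subset (E : EMSSet) (hE : E.Tame)
    {o o' : SimplexCategoryᵒᵖ} (f : o ⟶ o') (x : E.X.obj o)
    (k : Fin (o'.unop.len + 1)) :
    E.ksupp k (E.X.map f x) ⊆ E.ksupp (f.unop.toOrderHom k) x :=
  Set.sInter_mono fun _ ⟨hA, hxA⟩ => ⟨hA, hxA.map f hA (hE o' _ k)⟩
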